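/- Let ι be a finite type, A an additive commutative group with decidable equality, B an additive commutative group, and Φ : (ι → A) →+ B an additive homomorphism. Let e₀ : ι → A be the unique minimal-Hamming-weight representative of its syndrome class, i.e., for every x with Φ x = Φ e₀ one has hammingNorm e₀ ≤ hammingNorm x, and any such x with hammingNorm x = hammingNorm e₀ equals e₀. Then for every codeword c with Φ c = 0 and every error e with Φ e = Φ e₀ and hammingNorm e ≤ hammingNorm e₀, the decoding rule outputs (c + e) − e₀ = c. -/

import Mathlib

/-- Correctness of syndrome decoding: if `e₀` is the unique minimal-Hamming-weight
representative of its syndrome class, then for every codeword `c` (i.e. `Φ c = 0`)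
and every error `e` with the same syndrome as `e₀` and weight at most that of `e₀`,
decoding the received word `c + e` by subtracting `e₀` returns `c`. -/
theorem tgs_syndrome_decoding_correct {ι A B : Type*} [Fintype ι] [AddCommGroup A]
    [DecidableEq A] [AddCommGroup B] (Φ : (ι → A) →+ B) (e₀ : ι → A)
    (hmin : ∀ x : ι → A, Φ x = Φ e₀ → hammingNorm e₀ ≤ hammingNorm x)
    (huniq : ∀ x : ι → A, Φ x = Φ e₀ → hammingNorm x = hammingNorm e₀ → x = e₀) :
    ∀ c e : ι → A, Φ c = 0 → Φ e = Φ e₀ → hammingNorm e ≤ hammingNorm e₀ →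
      (c + e) - e₀ = c := by
  intro c e _ he hle
  obtain rfl : e = e₀ := huniq e he (hle.antisymm (hmin e he))
  exact add_sub_cancel_right c e
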